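/- arXiv:1501.04067 — 7 statements merged into one kernel-verified Lean document; each statement's English description precedes it below -/
import Mathlib

section
/- For any base b ≥ 2 and any natural number n ≥ b, every result m of a partition-and-sum of n that uses at least one actual split (more than one block) satisfies m < n. -/
/-!
Write the digit string as a first block `l` followed by the rest, so that
`n = ofDigits l + b ^ |l| * r` with `r` the value of the rest. Since every power of `b` is at
least `1`, summing the remaining blocks separately gives at most `r`; and `r > 0` because the
leading digit of `n` is nonzero. As `b ^ |l| ≥ b ≥ 2`, the block sum is strictly below `n`.
-/

namespace Nat

lemma ofDigits_pos_of_getLast_ne_zero {b : ℕ} (hb : 0 < b) {l : List ℕ} (hl : l ≠ [])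
    (hlast : l.getLast hl ≠ 0) : 0 < ofDigits b l := by
  rw [← List.dropLast_append_getLast hl, ofDigits_append, ofDigits_singleton]
  have := pos_iff_ne_zero.2 hlast
  positivity

lemma ofDigits_pos_of_append_eq_digits {b n : ℕ} (hb : 0 < b) {p s : List ℕ} (hs : s ≠ [])
    (h : p ++ s = digits b n) : 0 < ofDigits b s := by
  have hn : n ≠ 0 := by
    rintro rfl
    simp_all
  refine ofDigits_pos_of_getLast_ne_zero hb hs ?_
  rw [← List.getLast_append_of_right_ne_nil p s hs]
  simpa only [h] using getLast_digit_ne_zero b hn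

lemma sum_map_ofDigits_le_ofDigits_flatten {b : ℕ} (hb : 0 < b) :
    ∀ L : List (List ℕ), (L.map (ofDigits b)).sum ≤ ofDigits b L.flatten
  | [] => le_rfl
  | l :: L => by
    rw [List.map_cons, List.sum_cons, List.flatten_cons, ofDigits_append]
    gcongr
    calc (L.map (ofDigits b)).sum ≤ ofDigits b L.flatten :=
          sum_map_ofDigits_le_ofDigits_flatten hb L
      _ ≤ b ^ l.length * ofDigits b L.flatten := le_mul_of_one_le_left' (one_le_pow _ _ hb)

lemma sum_map_ofDigits_cons_lt_ofDigits_flatten {b : ℕ} (hb : 1 < b) {l : List ℕ} (hl : l ≠ [])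
    {L : List (List ℕ)} (hL : 0 < ofDigits b L.flatten) :
    ((l :: L).map (ofDigits b)).sum < ofDigits b (l :: L).flatten := by
  rw [List.map_cons, List.sum_cons, List.flatten_cons, ofDigits_append]
  gcongr
  calc (L.map (ofDigits b)).sum ≤ ofDigits b L.flatten :=
        sum_map_ofDigits_le_ofDigits_flatten (zero_lt_of_lt hb) L
    _ < b ^ l.length * ofDigits b L.flatten :=
        lt_mul_of_one_lt_left hL (one_lt_pow (List.length_pos_iff.2 hl).ne' hb)

end Nat

theorem stmt_1_general (b n : ℕ) (hb : 2 ≤ b)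
    (L : List (List ℕ)) (hne : ∀ l ∈ L, l ≠ []) (hsplit : L.flatten = Nat.digits b n)
    (hlen : 2 ≤ L.length) :
    (L.map (fun l => Nat.ofDigits b l)).sum < n := by
  obtain ⟨l, m, L, rfl⟩ : ∃ l m L', L = l :: m :: L' := by
    match L, hlen with
    | l :: m :: L, _ => exact ⟨l, m, L, rfl⟩
  have hrest : (m :: L).flatten ≠ [] :=
    List.flatten_ne_nil_iff.2 ⟨m, List.mem_cons_self, hne m (by simp)⟩
  have hpos : 0 < Nat.ofDigits b (m :: L).flatten :=
    Nat.ofDigits_pos_of_append_eq_digits (by omega) hrest hsplit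
  calc _ < Nat.ofDigits b (l :: m :: L).flatten :=
        Nat.sum_map_ofDigits_cons_lt_ofDigits_flatten hb (hne l List.mem_cons_self) hpos
    _ = n := by rw [hsplit, Nat.ofDigits_digits]

theorem stmt_1 (b n : ℕ) (hb : 2 ≤ b) (hn : b ≤ n)
    (L : List (List ℕ)) (hne : ∀ l ∈ L, l ≠ []) (hsplit : L.flatten = Nat.digits b n)
    (hlen : 2 ≤ L.length) :
    (L.map (fun l => Nat.ofDigits b l)).sum < n :=
  stmt_1_general b n hb L hne hsplit hlen
end

section
/- Every natural number n ≥ 2 can be reduced to a power of 2 by a single application of partition and sum in base 2; consequently every natural number n ≥ 1 can be reduced to 1 in at most two applications of partition and sum in base 2. -/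
/-- `PartSum b n m` : `m` is obtained from `n` by splitting the base-`b` digit string of
`n` into consecutive nonempty blocks and summing the base-`b` values of the blocks. -/
def PartSum (b n m : ℕ) : Prop :=
  ∃ L : List (List ℕ), (∀ l ∈ L, l ≠ []) ∧ L.flatten = Nat.digits b n ∧
    m = (L.map (fun l => Nat.ofDigits b l)).sum

def Ach (w : List ℕ) (m : ℕ) : Prop :=
  ∃ L : List (List ℕ), (∀ l ∈ L, l ≠ []) ∧ L.flatten = w ∧
    m = (L.map (fun l => Nat.ofDigits 2 l)).sum

lemma partSum_iff_ach (n m : ℕ) : PartSum 2 n m ↔ Ach (Nat.digits 2 n) m := Iff.rfl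

lemma ach_nil : Ach [] 0 := ⟨[], by simp⟩

lemma ach_block (w : List ℕ) (h : w ≠ []) : Ach w (Nat.ofDigits 2 w) :=
  ⟨[w], by simp [h]⟩

lemma ach_append {w1 w2 : List ℕ} {a b : ℕ} (h1 : Ach w1 a) (h2 : Ach w2 b) :
    Ach (w1 ++ w2) (a + b) := by
  obtain ⟨L1, hn1, hf1, hs1⟩ := h1
  obtain ⟨L2, hn2, hf2, hs2⟩ := h2
  exact ⟨L1 ++ L2, by
    refine ⟨?_, ?_, ?_⟩
    · intro l hl; rcases List.mem_append.1 hl with h | h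
      · exact hn1 l h
      · exact hn2 l h
    · simp [hf1, hf2]
    · simp [hs1, hs2]⟩

lemma ach_of_eq {w w' : List ℕ} {m m' : ℕ} (h : Ach w m) (hw : w = w') (hm : m = m') :
    Ach w' m' := hw ▸ hm ▸ h

lemma ofd_rep0 (a : ℕ) : Nat.ofDigits 2 (List.replicate a 0) = 0 := by
  induction a with
  | zero => rfl
  | succ n ih => simp [List.replicate_succ, Nat.ofDigits_cons, ih]

lemma ofd_rep_append (a : ℕ) (l : List ℕ) :
    Nat.ofDigits 2 (List.replicate a 0 ++ l) = 2 ^ a * Nat.ofDigits 2 l := by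
  rw [Nat.ofDigits_append, ofd_rep0, List.length_replicate]
  push_cast
  ring

lemma ach_zeros (a : ℕ) : Ach (List.replicate a 0) 0 := by
  cases a with
  | zero => exact ach_nil
  | succ n =>
      have := ach_block (List.replicate (n+1) 0) (by simp)
      rwa [ofd_rep0] at this

def seg (b : ℕ) : List ℕ := List.replicate b 0 ++ [1]

lemma ach_single (b e : ℕ) (h : e ≤ b) : Ach (seg b) (2 ^ e) := by
  have hsplit : seg b = List.replicate (b - e) 0 ++ (List.replicate e 0 ++ [1]) := by
    rw [seg, ← List.append_assoc, ← List.replicate_add]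
    congr 2
    omega
  have hb := ach_block (List.replicate e 0 ++ [1]) (by simp)
  rw [ofd_rep_append] at hb
  have : Nat.ofDigits 2 [1] = 1 := by simp [Nat.ofDigits]
  rw [this, mul_one] at hb
  exact ach_of_eq (ach_append (ach_zeros (b - e)) hb) hsplit.symm (by ring)

lemma ach_pair (bt bb e : ℕ) (h : e ≤ bb) :
    Ach (seg bb ++ seg bt) (2 ^ e * (2 ^ (bt + 1) + 1)) := by
  have hsplit : seg bb ++ seg bt =
      List.replicate (bb - e) 0 ++ (List.replicate e 0 ++ ([1] ++ (List.replicate bt 0 ++ [1]))) := by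
    show List.replicate bb 0 ++ [1] ++ (List.replicate bt 0 ++ [1]) = _
    rw [show bb = (bb - e) + e from by omega, List.replicate_add]
    simp only [List.replicate_add, List.append_assoc, List.cons_append, List.nil_append, Nat.add_sub_cancel]
  have hval : Nat.ofDigits 2 (List.replicate e 0 ++ ([1] ++ (List.replicate bt 0 ++ [1]))) =
      2 ^ e * (2 ^ (bt + 1) + 1) := by
    rw [ofd_rep_append, Nat.ofDigits_append, ofd_rep_append]
    simp [Nat.ofDigits]
    ring
  have hb := ach_block (List.replicate e 0 ++ ([1] ++ (List.replicate bt 0 ++ [1]))) (by simp)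
  rw [hval] at hb
  exact ach_of_eq (ach_append (ach_zeros (bb - e)) hb) hsplit.symm (by ring)

lemma ach_triple (b : ℕ) : Ach (seg b ++ seg 0 ++ seg 0) 7 := by
  have hsplit : seg b ++ seg 0 ++ seg 0 = List.replicate b 0 ++ [1, 1, 1] := by
    simp [seg]
  have hb := ach_block ([1,1,1]) (by simp)
  have hval : Nat.ofDigits 2 [1,1,1] = 7 := by simp [Nat.ofDigits]
  rw [hval] at hb
  exact ach_of_eq (ach_append (ach_zeros b) hb) hsplit.symm (by ring)

def tau : List ℕ → List ℕ
  | [] => []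
  | b :: G => tau G ++ seg b

lemma tau_concat (G : List ℕ) (b : ℕ) : tau (G ++ [b]) = seg b ++ tau G := by
  induction G with
  | nil => simp [tau]
  | cons a G ih => simp [tau, ih]

lemma ach_tau_len : ∀ G : List ℕ, G ≠ [] → Ach (tau G) G.length := by
  intro G
  induction G with
  | nil => intro h; simp at h
  | cons b G ih =>
      intro _
      cases G with
      | nil =>
          have := ach_single b 0 (Nat.zero_le _)
          exact ach_of_eq this (by simp [tau]) (by simp)
      | cons c G' =>
          have h2 := ach_append (ih (by simp)) (ach_single b 0 (Nat.zero_le _))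
          exact ach_of_eq h2 (by simp [tau]) (by simp)

lemma pair3 (b : ℕ) : Ach (seg b ++ seg 0) 3 :=
  ach_of_eq (ach_pair 0 b 0 (Nat.zero_le _)) rfl (by norm_num)

lemma pair5 (b : ℕ) : Ach (seg b ++ seg 1) 5 :=
  ach_of_eq (ach_pair 1 b 0 (Nat.zero_le _)) rfl (by norm_num)

lemma pair6 {b : ℕ} (h : 1 ≤ b) : Ach (seg b ++ seg 0) 6 :=
  ach_of_eq (ach_pair 0 b 1 h) rfl (by norm_num)

lemma single1 (b : ℕ) : Ach (seg b) 1 :=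
  ach_of_eq (ach_single b 0 (Nat.zero_le _)) rfl (by norm_num)

lemma single2 {b : ℕ} (h : 1 ≤ b) : Ach (seg b) 2 :=
  ach_of_eq (ach_single b 1 h) rfl (by norm_num)

lemma single4 {b : ℕ} (h : 2 ≤ b) : Ach (seg b) 4 :=
  ach_of_eq (ach_single b 2 h) rfl (by norm_num)

theorem ach_main (s : ℕ) : ∀ G : List ℕ, ∀ r : ℕ, G.length = s → 2 ≤ s →
    (r ≤ s - 2 ∨ (s = 2 ∧ r = 1)) → ¬(G = [0,0,0,0,0] ∧ r = 3) →
    Ach (tau G) (s + r) := by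
  induction s using Nat.strong_induction_on with
  | _ s IH =>
  intro G r hlen hs hall hexc
  by_cases hr0 : r = 0
  · subst hr0
    exact ach_of_eq (ach_tau_len G (by intro h; subst h; simp at hlen; omega)) rfl (by omega)
  obtain ⟨b1, G', rfl⟩ : ∃ b1 G', G = b1 :: G' := by
    cases G with
    | nil => simp at hlen; omega
    | cons a t => exact ⟨a, t, rfl⟩
  simp only [List.length_cons] at hlen
  by_cases hs2 : s = 2
  · -- s = 2, r = 1
    subst hs2
    have hr1 : r = 1 := by rcases hall with h | h <;> omega
    subst hr1
    obtain ⟨b2, rfl⟩ : ∃ b2, G' = [b2] := by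
      cases G' with
      | nil => simp at hlen
      | cons a t =>
        cases t with
        | nil => exact ⟨a, rfl⟩
        | cons c u => simp at hlen
    by_cases hb1 : b1 = 0
    · subst hb1
      exact ach_of_eq (pair3 b2) (by simp [tau]) (by norm_num)
    · exact ach_of_eq (ach_append (single1 b2) (single2 (b := b1) (by omega)))
        (by simp [tau]) (by norm_num)
  -- now s ≥ 3
  have hs3 : 3 ≤ s := by omega
  have hr : r ≤ s - 2 := by rcases hall with h | h <;> omega
  by_cases hb1 : b1 = 0
  case neg =>
    -- b1 ≥ 1
    by_cases hd : G' = [0,0,0,0,0] ∧ r = 4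
    · obtain ⟨rfl, rfl⟩ := hd
      have hs6 : s = 6 := by simp at hlen; omega
      subst hs6
      by_cases hb1' : b1 = 1
      · subst hb1'
        have rest := IH 4 (by omega) [0,0,0,0] 1 (by simp) (by omega) (by left; omega)
          (by intro ⟨h, _⟩; simp at h)
        exact ach_of_eq (ach_append rest (pair5 0))
          (by simp [tau, List.append_assoc]) (by norm_num)
      · have rest := IH 5 (by omega) [0,0,0,0,0] 1 (by simp) (by omega) (by left; omega)
          (by intro ⟨_, h⟩; omega)
        exact ach_of_eq (ach_append rest (single4 (b := b1) (by omega)))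
          (by simp [tau, List.append_assoc]) (by norm_num)
    · have rest := IH (s-1) (by omega) G' (r-1) (by omega) (by omega)
        (by left; omega)
        (by intro ⟨hG, h3⟩; exact hd ⟨hG, by omega⟩)
      exact ach_of_eq (ach_append rest (single2 (b := b1) (by omega)))
        (by simp [tau]) (by omega)
  case pos =>
  subst hb1
  by_cases hrs : r ≤ s - 3
  · -- generic pair step; here r ≥ 1 so s ≥ 4
    have hs4 : 4 ≤ s := by omega
    obtain ⟨b2, G'', rfl⟩ : ∃ b2 G'', G' = b2 :: G'' := by
      cases G' with
      | nil => simp at hlen; omega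
      | cons a t => exact ⟨a, t, rfl⟩
    simp only [List.length_cons] at hlen
    by_cases hd : G'' = [0,0,0,0,0] ∧ r = 4
    · obtain ⟨rfl, rfl⟩ := hd
      have hs7 : s = 7 := by simp at hlen; omega
      subst hs7
      by_cases hb2 : b2 = 0
      · subst hb2
        have rest := IH 4 (by omega) [0,0,0,0] 0 (by simp) (by omega) (by left; omega)
          (by intro ⟨h, _⟩; simp at h)
        exact ach_of_eq (ach_append rest (ach_triple 0))
          (by simp [tau, List.append_assoc]) (by norm_num)
      · have rest := IH 5 (by omega) [0,0,0,0,0] 0 (by simp) (by omega) (by left; omega)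
          (by intro ⟨_, h⟩; omega)
        exact ach_of_eq (ach_append rest (pair6 (b := b2) (by omega)))
          (by simp [tau, List.append_assoc]) (by norm_num)
    · have hall'' : r - 1 ≤ (s-2) - 2 ∨ (s - 2 = 2 ∧ r - 1 = 1) := by left; omega
      have rest := IH (s-2) (by omega) G'' (r-1) (by omega) (by omega) hall''
        (by intro ⟨hG, h3⟩; exact hd ⟨hG, by omega⟩)
      exact ach_of_eq (ach_append rest (pair3 b2))
        (by simp [tau, List.append_assoc]) (by omega)
  · -- r = s - 2
    have hr2 : r = s - 2 := by omega
    by_cases hs5 : s ≥ 6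
    · obtain ⟨b2, G'', rfl⟩ : ∃ b2 G'', G' = b2 :: G'' := by
        cases G' with
        | nil => simp at hlen; omega
        | cons a t => exact ⟨a, t, rfl⟩
      simp only [List.length_cons] at hlen
      by_cases hb2 : b2 = 0
      · subst hb2
        obtain ⟨b3, G''', rfl⟩ : ∃ b3 G''', G'' = b3 :: G''' := by
          cases G'' with
          | nil => simp at hlen; omega
          | cons a t => exact ⟨a, t, rfl⟩
        simp only [List.length_cons] at hlen
        have rest := IH (s-3) (by omega) G''' (s-6) (by omega) (by omega) (by left; omega)
          (by intro ⟨hG, h3⟩; have : G'''.length = 5 := by rw [hG]; simp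
              omega)
        exact ach_of_eq (ach_append rest (ach_triple b3))
          (by simp [tau, List.append_assoc]) (by omega)
      · have rest := IH (s-2) (by omega) G'' (s-6) (by omega) (by omega) (by left; omega)
          (by intro ⟨hG, h3⟩; have : G''.length = 5 := by rw [hG]; simp
              omega)
        exact ach_of_eq (ach_append rest (pair6 (b := b2) (by omega)))
          (by simp [tau, List.append_assoc]) (by omega)
    · -- s ∈ {3,4,5}
      interval_cases s
      · -- s = 3, r = 1
        obtain ⟨b2, b3, rfl⟩ : ∃ b2 b3, G' = [b2, b3] := by
          match G', hlen with
          | [b2, b3], _ => exact ⟨b2, b3, rfl⟩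
        exact ach_of_eq (ach_append (single1 b3) (pair3 b2))
          (by simp [tau, List.append_assoc]) (by omega)
      · -- s = 4, r = 2
        obtain ⟨b2, b3, b4, rfl⟩ : ∃ b2 b3 b4, G' = [b2, b3, b4] := by
          match G', hlen with
          | [b2, b3, b4], _ => exact ⟨b2, b3, b4, rfl⟩
        have rest := IH 2 (by omega) [b3, b4] 1 (by simp) (by omega) (by right; omega)
          (by intro ⟨h, _⟩; simp at h)
        exact ach_of_eq (ach_append rest (pair3 b2))
          (by simp [tau, List.append_assoc]) (by omega)
      · -- s = 5, r = 3
        have hr3 : r = 3 := by omega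
        subst hr3
        obtain ⟨b2, b3, b4, b5, rfl⟩ : ∃ b2 b3 b4 b5, G' = [b2, b3, b4, b5] := by
          match G', hlen with
          | [b2, b3, b4, b5], _ => exact ⟨b2, b3, b4, b5, rfl⟩
        match b2, hexc with
        | 0, hexc =>
          match b3, hexc with
          | 0, hexc =>
            match b4, hexc with
            | 0, hexc =>
              match b5, hexc with
              | 0, hexc => exact absurd ⟨rfl, rfl⟩ hexc
              | 1, _ =>
                exact ach_of_eq
                  (ach_append (ach_append (single2 (b := 1) (by omega)) (pair3 0)) (pair3 0))
                  (by simp [tau, List.append_assoc]) (by norm_num)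
              | (b5 + 2), _ =>
                exact ach_of_eq
                  (ach_append (single4 (b := b5 + 2) (by omega)) (ach_tau_len [0,0,0,0] (by simp)))
                  (by simp [tau, List.append_assoc]) (by norm_num)
            | 1, _ =>
              exact ach_of_eq (ach_append (pair5 b5) (ach_tau_len [0,0,0] (by simp)))
                (by simp [tau, List.append_assoc]) (by norm_num)
            | (b4 + 2), _ =>
              exact ach_of_eq
                (ach_append (ach_append (single1 b5) (single4 (b := b4 + 2) (by omega)))
                  (ach_tau_len [0,0,0] (by simp)))
                (by simp [tau, List.append_assoc]) (by norm_num)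
          | 1, _ =>
            exact ach_of_eq
              (ach_append (ach_append (single1 b5) (pair5 b4)) (ach_tau_len [0,0] (by simp)))
              (by simp [tau, List.append_assoc]) (by norm_num)
          | (b3 + 2), _ =>
            exact ach_of_eq
              (ach_append (ach_append (ach_tau_len [b4, b5] (by simp))
                (single4 (b := b3 + 2) (by omega))) (ach_tau_len [0,0] (by simp)))
              (by simp [tau, List.append_assoc]) (by norm_num)
        | 1, _ =>
          exact ach_of_eq
            (ach_append (ach_append (ach_tau_len [b4, b5] (by simp)) (pair5 b3)) (single1 0))
            (by simp [tau, List.append_assoc]) (by norm_num)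
        | (b2 + 2), _ =>
          exact ach_of_eq
            (ach_append (ach_append (ach_tau_len [b3, b4, b5] (by simp))
              (single4 (b := b2 + 2) (by omega))) (single1 0))
            (by simp [tau, List.append_assoc]) (by norm_num)

lemma digits_eq_tau : ∀ n : ℕ, 1 ≤ n → ∃ G : List ℕ, G ≠ [] ∧ Nat.digits 2 n = tau G := by
  intro n
  induction n using Nat.strong_induction_on with
  | _ n IH =>
  intro hn
  rcases Nat.lt_or_ge n 2 with h2 | h2
  · have : n = 1 := by omega
    subst this
    exact ⟨[0], by simp, by simp [tau, seg]⟩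
  · have hm : 1 ≤ n / 2 := by omega
    obtain ⟨G, hG, hdig⟩ := IH (n / 2) (by omega) hm
    have hd : Nat.digits 2 n = n % 2 :: Nat.digits 2 (n / 2) :=
      Nat.digits_def' (by norm_num) (by omega)
    rcases Nat.even_or_odd n with he | ho
    · obtain ⟨G₀, b, rfl⟩ := List.eq_nil_or_concat G |>.resolve_left hG
      rw [List.concat_eq_append] at hdig
      refine ⟨G₀ ++ [b + 1], by simp, ?_⟩
      rw [hd, hdig, tau_concat, tau_concat]
      have : n % 2 = 0 := Nat.even_iff.mp he
      rw [this]
      simp [seg, List.replicate_succ]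
    · refine ⟨G ++ [0], by simp, ?_⟩
      rw [hd, hdig, tau_concat]
      have : n % 2 = 1 := Nat.odd_iff.mp ho
      rw [this]
      simp [seg]

lemma digits_two_pow (k : ℕ) : Nat.digits 2 (2 ^ k) = seg k := by
  induction k with
  | zero => simp [seg]
  | succ k ih =>
      have hd : Nat.digits 2 (2 ^ (k+1)) = (2 ^ (k+1)) % 2 :: Nat.digits 2 (2 ^ (k+1) / 2) :=
        Nat.digits_def' (by norm_num) (by positivity)
      have h1 : 2 ^ (k+1) % 2 = 0 := by
        simp [Nat.pow_succ, Nat.mul_mod_left]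
      have h2 : 2 ^ (k+1) / 2 = 2 ^ k := by
        rw [Nat.pow_succ, Nat.mul_div_cancel] <;> norm_num
      rw [hd, h1, h2, ih]
      simp [seg, List.replicate_succ]

lemma ach31 : Ach (tau [0,0,0,0,0]) 16 := by
  have h : tau [0,0,0,0,0] = [1,1,1,1,1] := by simp [tau, seg]
  rw [h]
  refine ⟨[[1,1,1,1],[1]], ?_, by simp, ?_⟩
  · intro l hl; simp at hl; rcases hl with rfl | rfl <;> simp
  · simp [Nat.ofDigits]

lemma part1 (n : ℕ) (hn : 2 ≤ n) : ∃ m k : ℕ, PartSum 2 n m ∧ m = 2 ^ k := by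
  obtain ⟨G, hG, hdig⟩ := digits_eq_tau n (by omega)
  rcases Nat.lt_or_ge G.length 2 with h1 | h2
  · -- single one: n is a power of two
    obtain ⟨b, rfl⟩ : ∃ b, G = [b] := by
      cases G with
      | nil => simp at hG
      | cons a t =>
          cases t with
          | nil => exact ⟨a, rfl⟩
          | cons c u => simp at h1
    have hblock := ach_block (seg b) (by simp [seg])
    have hval : Nat.ofDigits 2 (seg b) = 2 ^ b := by
      rw [seg, ofd_rep_append]
      simp [Nat.ofDigits]
    refine ⟨2 ^ b, b, ?_, rfl⟩
    rw [partSum_iff_ach, hdig]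
    have : tau [b] = seg b := by simp [tau]
    rw [this]
    exact ach_of_eq hblock rfl hval
  · by_cases hexc : G = [0,0,0,0,0]
    · refine ⟨16, 4, ?_, by norm_num⟩
      rw [partSum_iff_ach, hdig, hexc]
      exact ach31
    · set s := G.length with hs
      set k := Nat.log 2 (s - 1) + 1 with hk
      have hlt : s - 1 < 2 ^ k := Nat.lt_pow_succ_log_self (by norm_num) (s - 1)
      have hle : 2 ^ Nat.log 2 (s - 1) ≤ s - 1 :=
        Nat.pow_log_le_self 2 (by omega)
      have hpow : 2 ^ k = 2 ^ Nat.log 2 (s - 1) * 2 := by rw [hk, pow_succ]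
      have hks : s ≤ 2 ^ k := by omega
      have hk2 : 2 ^ k ≤ 2 * s - 2 := by omega
      have main := ach_main s G (2 ^ k - s) rfl h2 (by left; omega)
        (by intro ⟨hG', _⟩; exact hexc hG')
      refine ⟨2 ^ k, k, ?_, rfl⟩
      rw [partSum_iff_ach, hdig]
      exact ach_of_eq main rfl (by omega)

lemma partSum_pow_one (k : ℕ) : PartSum 2 (2 ^ k) 1 := by
  rw [partSum_iff_ach, digits_two_pow]
  have := ach_tau_len [k] (by simp)
  simpa [tau] using this

theorem stmt_5 :
    (∀ n : ℕ, 2 ≤ n → ∃ m k : ℕ, PartSum 2 n m ∧ m = 2 ^ k) ∧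
    (∀ n : ℕ, 1 ≤ n →
      n = 1 ∨ PartSum 2 n 1 ∨ ∃ m : ℕ, PartSum 2 n m ∧ PartSum 2 m 1) := by
  constructor
  · exact part1
  · intro n hn
    rcases Nat.lt_or_ge n 2 with h | h
    · left; omega
    · right; right
      obtain ⟨m, k, hpm, rfl⟩ := part1 n h
      exact ⟨2 ^ k, hpm, partSum_pow_one k⟩
end

section
/- Let b ≥ 4. Every natural number n with 1 ≤ n < 3b² − b − 1 can be reduced to a single digit (a number less than b) in at most two applications of partition and sum in base b. -/
lemma partSum_digitSum (b n : ℕ) : PartSum b n ((Nat.digits b n).sum) := by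
  refine ⟨(Nat.digits b n).map (fun d => [d]), ?_, ?_, ?_⟩
  · intro l hl
    simp only [List.mem_map] at hl
    obtain ⟨a, -, rfl⟩ := hl
    simp
  · induction Nat.digits b n with
    | nil => simp
    | cons a t ih => simp [ih]
  · rw [List.map_map]
    simp [Function.comp_def, Nat.ofDigits_singleton]

lemma digits_two (b n : ℕ) (hb : 1 < b) (h1 : b ≤ n) (h2 : n < b * b) :
    Nat.digits b n = [n % b, n / b] := by
  have h3 : 0 < n / b := Nat.div_pos h1 (by omega)
  have h4 : n / b < b := Nat.div_lt_of_lt_mul h2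
  rw [Nat.digits_def' hb (by omega), Nat.digits_def' hb h3,
    Nat.div_eq_of_lt h4, Nat.mod_eq_of_lt h4, Nat.digits_zero]

lemma digits_three (b n : ℕ) (hb : 1 < b) (h1 : b * b ≤ n) (h2 : n < b * b * b) :
    Nat.digits b n = [n % b, n / b % b, n / b / b] := by
  have h3 : b ≤ n / b := (Nat.le_div_iff_mul_le (by omega)).2 (by linarith)
  have h4 : n / b < b * b := Nat.div_lt_of_lt_mul (by linarith [h2, mul_assoc b b b])
  have h0 : 0 < n := by nlinarith
  rw [Nat.digits_def' hb h0, digits_two b (n/b) hb h3 h4]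

lemma sum_bound (b n : ℕ) (hb : 4 ≤ b) (hbn : b ≤ n) (hlt : n < 3 * b ^ 2 - b - 1)
    (hne : n ≠ 2 * b ^ 2 - 1) : (Nat.digits b n).sum ≤ 2 * b - 2 := by
  have hb2 : b ^ 2 = b * b := sq b
  rw [hb2] at hlt hne
  have hlt' : n + b + 1 < 3 * (b * b) := by omega
  rcases lt_or_ge n (b * b) with h | h
  · rw [digits_two b n (by omega) hbn h]
    have hm := Nat.mod_lt n (show 0 < b by omega)
    have h4 : n / b < b := Nat.div_lt_of_lt_mul h
    simp only [List.sum_cons, List.sum_nil]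
    omega
  · have h2 : n < b * b * b := by nlinarith [hlt']
    rw [digits_three b n (by omega) h h2]
    simp only [List.sum_cons, List.sum_nil]
    have e0 : n = b * (n / b) + n % b := (Nat.div_add_mod n b).symm
    have e1 : n / b = b * (n / b / b) + n / b % b := (Nat.div_add_mod (n/b) b).symm
    have hd0 : n % b < b := Nat.mod_lt _ (by omega)
    have hd1 : n / b % b < b := Nat.mod_lt _ (by omega)
    have hq1 : b ≤ n / b := (Nat.le_div_iff_mul_le (by omega)).2 (by nlinarith)
    have hq2 : n / b < 3 * b := Nat.div_lt_of_lt_mul (by nlinarith [hlt'])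
    have hd2a : 1 ≤ n / b / b := (Nat.le_div_iff_mul_le (by omega)).2 (by omega)
    have hd2b : n / b / b < 3 := Nat.div_lt_of_lt_mul (by omega)
    set q := n / b
    set d0 := n % b
    set d1 := q % b
    set d2 := q / b
    by_contra hcon
    push_neg at hcon
    have hcase : d2 = 1 ∨ d2 = 2 := by omega
    rcases hcase with h3 | h3 <;> rw [h3] at e1
    · have hx : d1 + 1 = b ∧ d0 + 1 = b := by omega
      have k : b * b = b * d1 + b := by rw [← hx.1]; ring
      have k3 : b * q = b * b + b * d1 := by rw [e1]; ring
      omega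
    · have hx : d1 + 1 = b ∨ (d1 + 2 = b ∧ d0 + 1 = b) := by omega
      rcases hx with hx | hx
      · have k : b * b = b * d1 + b := by rw [← hx]; ring
        have k3 : b * q = 2 * (b * b) + b * d1 := by rw [e1]; ring
        omega
      · have k : b * b = b * d1 + 2 * b := by rw [← hx.1]; ring
        have k3 : b * q = 2 * (b * b) + b * d1 := by rw [e1]; ring
        omega

lemma digits_special (b : ℕ) (hb : 4 ≤ b) :
    Nat.digits b (2 * b ^ 2 - 1) = [b - 1, b - 1, 1] := by
  have hb2 : (2:ℕ) * b ^ 2 = 2 * (b * b) := by ring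
  rw [hb2]
  have key : b * (2 * b - 1) + b = 2 * (b * b) := by
    have : b * (2 * b - 1) + b = b * (2 * b) := by
      rw [← Nat.mul_succ]; congr 1; omega
    rw [this]; ring
  have e : 2 * (b * b) - 1 = b * (2 * b - 1) + (b - 1) := by omega
  have h1 : b * b ≤ 2 * (b * b) - 1 := by omega
  have h2 : 2 * (b * b) - 1 < b * b * b := by
    have : 2 * (b * b) ≤ b * b * b := by nlinarith
    omega
  have hm : (2 * (b * b) - 1) % b = b - 1 := by
    rw [e, Nat.mul_add_mod]; exact Nat.mod_eq_of_lt (by omega)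
  have hd : (2 * (b * b) - 1) / b = 2 * b - 1 := by
    rw [e, Nat.mul_add_div (by omega)]
    rw [Nat.div_eq_of_lt (by omega)]
    omega
  have e2 : 2 * b - 1 = b * 1 + (b - 1) := by omega
  have hm2 : (2 * b - 1) % b = b - 1 := by
    rw [e2, Nat.mul_add_mod]; exact Nat.mod_eq_of_lt (by omega)
  have hd2 : (2 * b - 1) / b = 1 := by
    rw [e2, Nat.mul_add_div (by omega), Nat.div_eq_of_lt (by omega)]
  rw [digits_three b _ (by omega) h1 h2, hm, hd, hm2, hd2]

lemma digits_sq (b : ℕ) (hb : 4 ≤ b) : Nat.digits b (b * b) = [0, 0, 1] := by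
  have h2 : b * b < b * b * b := by nlinarith
  have hd : b * b / b = b := Nat.mul_div_cancel_left b (by omega)
  rw [digits_three b _ (by omega) le_rfl h2, Nat.mul_mod_left, hd,
    Nat.mod_self, Nat.div_self (by omega)]

theorem stmt_7 (b n : ℕ) (hb : 4 ≤ b) (hn : 1 ≤ n) (hlt : n < 3 * b ^ 2 - b - 1) :
    n < b ∨
    (∃ m₁, PartSum b n m₁ ∧ m₁ < b) ∨
    (∃ m₁ m₂, PartSum b n m₁ ∧ PartSum b m₁ m₂ ∧ m₂ < b) := by
  rcases lt_or_ge n b with h | h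
  · exact Or.inl h
  right
  by_cases hne : n = 2 * b ^ 2 - 1
  · right
    refine ⟨b * b, 1, ?_, ?_, by omega⟩
    · subst hne
      refine ⟨[[b - 1, b - 1], [1]], ?_, ?_, ?_⟩
      · intro l hl
        simp only [List.mem_cons, List.not_mem_nil, or_false] at hl
        rcases hl with rfl | rfl <;> simp
      · rw [digits_special b hb]; rfl
      · have o1 : Nat.ofDigits b [b - 1, b - 1] = (b - 1) + b * (b - 1) := by
          simp [Nat.ofDigits_cons, Nat.ofDigits_nil]
        have o2 : Nat.ofDigits b [1] = 1 := by
          simp [Nat.ofDigits_singleton]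
        simp only [List.map_cons, List.map_nil, List.sum_cons, List.sum_nil, o1, o2]
        have k : b * (b - 1) + b = b * b := by rw [← Nat.mul_succ]; congr 1; omega
        omega
    · have h1 : (Nat.digits b (b * b)).sum = 1 := by rw [digits_sq b hb]; rfl
      have := partSum_digitSum b (b * b)
      rwa [h1] at this
  · set S := (Nat.digits b n).sum with hS
    have hps : PartSum b n S := partSum_digitSum b n
    have hSle : S ≤ 2 * b - 2 := sum_bound b n hb h hlt hne
    rcases lt_or_ge S b with h2 | h2
    · exact Or.inl ⟨S, hps, h2⟩
    · right
      refine ⟨S, (Nat.digits b S).sum, hps, partSum_digitSum b S, ?_⟩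
      have hS2 : S < b * b := by
        have h9 : S + 2 ≤ 2 * b := by omega
        nlinarith [h9]
      rw [digits_two b S (by omega) h2 hS2]
      have h5 : S / b = 1 := Nat.div_eq_of_lt_le (by omega) (by omega)
      have h6 : S % b = S - b := by
        rw [Nat.mod_eq_sub_mod h2, Nat.mod_eq_of_lt (by omega)]
      rw [h5, h6]
      simp only [List.sum_cons, List.sum_nil]
      omega
end

section
/- Let b ≥ 4. The number n = 3b² − b − 1, whose base-b digits are 2, b−2, b−1, cannot be reduced to a single digit in two or fewer applications of partition and sum in base b. -/
lemma flatten_nil (L : List (List ℕ)) (hne : ∀ l ∈ L, l ≠ []) (h : L.flatten = []) :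
    L = [] := by
  cases L with
  | nil => rfl
  | cons l L' =>
    have hl := hne l (by simp)
    cases l with
    | nil => exact absurd rfl hl
    | cons a as => simp at h

lemma flatten_one (L : List (List ℕ)) (hne : ∀ l ∈ L, l ≠ []) (x : ℕ)
    (h : L.flatten = [x]) : L = [[x]] := by
  cases L with
  | nil => simp at h
  | cons l L' =>
    have hl := hne l (by simp)
    have hne' : ∀ l ∈ L', l ≠ [] := fun l hl => hne l (by simp [hl])
    cases l with
    | nil => exact absurd rfl hl
    | cons a as =>
      cases as with
      | nil =>
        simp only [List.flatten_cons, List.cons_append, List.nil_append,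
          List.cons.injEq] at h
        obtain ⟨ha, h'⟩ := h
        have h0 := flatten_nil L' hne' h'
        subst ha h0; rfl
      | cons a2 as2 =>
        have := congrArg List.length h
        simp at this

lemma flatten_two (L : List (List ℕ)) (hne : ∀ l ∈ L, l ≠ []) (x y : ℕ)
    (h : L.flatten = [x, y]) : L = [[x, y]] ∨ L = [[x], [y]] := by
  cases L with
  | nil => simp at h
  | cons l L' =>
    have hl := hne l (by simp)
    have hne' : ∀ l ∈ L', l ≠ [] := fun l hl => hne l (by simp [hl])
    cases l with
    | nil => exact absurd rfl hl
    | cons a as =>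
      cases as with
      | nil =>
        simp only [List.flatten_cons, List.cons_append, List.nil_append,
          List.cons.injEq] at h
        obtain ⟨ha, h'⟩ := h
        have h0 := flatten_one L' hne' y h'
        subst ha h0; right; rfl
      | cons a2 as2 =>
        cases as2 with
        | nil =>
          simp only [List.flatten_cons, List.cons_append, List.nil_append,
            List.cons.injEq] at h
          obtain ⟨ha, ha2, h'⟩ := h
          have h0 := flatten_nil L' hne' h'
          subst ha ha2 h0; left; rfl
        | cons a3 as3 =>
          have := congrArg List.length h
          simp at this

lemma flatten_three (L : List (List ℕ)) (hne : ∀ l ∈ L, l ≠ []) (x y z : ℕ)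
    (h : L.flatten = [x, y, z]) :
    L = [[x, y, z]] ∨ L = [[x], [y, z]] ∨ L = [[x, y], [z]] ∨ L = [[x], [y], [z]] := by
  cases L with
  | nil => simp at h
  | cons l L' =>
    have hl := hne l (by simp)
    have hne' : ∀ l ∈ L', l ≠ [] := fun l hl => hne l (by simp [hl])
    cases l with
    | nil => exact absurd rfl hl
    | cons a as =>
      cases as with
      | nil =>
        simp only [List.flatten_cons, List.cons_append, List.nil_append,
          List.cons.injEq] at h
        obtain ⟨ha, h'⟩ := h
        rcases flatten_two L' hne' y z h' with h2 | h2 <;> subst ha h2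
        · right; left; rfl
        · right; right; right; rfl
      | cons a2 as2 =>
        cases as2 with
        | nil =>
          simp only [List.flatten_cons, List.cons_append, List.nil_append,
            List.cons.injEq] at h
          obtain ⟨ha, ha2, h'⟩ := h
          have h0 := flatten_one L' hne' z h'
          subst ha ha2 h0; right; right; left; rfl
        | cons a3 as3 =>
          cases as3 with
          | nil =>
            simp only [List.flatten_cons, List.cons_append, List.nil_append,
              List.cons.injEq] at h
            obtain ⟨ha, ha2, ha3, h'⟩ := h
            have h0 := flatten_nil L' hne' h'
            subst ha ha2 ha3 h0; left; rfl
          | cons a4 as4 =>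
            have := congrArg List.length h
            simp at this

lemma digits_two_s8 (b x y : ℕ) (hb : 1 < b) (hx : x < b) (hy : 0 < y) (hyb : y < b) :
    Nat.digits b (x + b * y) = [x, y] := by
  have hby : 0 < b * y := Nat.mul_pos (by omega) hy
  have h1 : 0 < x + b * y := by omega
  rw [Nat.digits_def' hb h1]
  have hm : (x + b * y) % b = x := by
    rw [Nat.add_mul_mod_self_left, Nat.mod_eq_of_lt hx]
  have hd : (x + b * y) / b = y := by
    rw [Nat.add_mul_div_left _ _ (by omega : 0 < b), Nat.div_eq_of_lt hx]; omega
  rw [hm, hd, Nat.digits_def' hb hy, Nat.mod_eq_of_lt hyb, Nat.div_eq_of_lt hyb]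
  simp

lemma digits_three_s8 (b x y z : ℕ) (hb : 1 < b) (hx : x < b) (hy : y < b)
    (hz : 0 < z) (hzb : z < b) :
    Nat.digits b (x + b * (y + b * z)) = [x, y, z] := by
  have hbz : 0 < b * z := Nat.mul_pos (by omega) hz
  have hb2 : 0 < b * (y + b * z) := Nat.mul_pos (by omega) (by omega)
  have h1 : 0 < x + b * (y + b * z) := by omega
  rw [Nat.digits_def' hb h1]
  have hm : (x + b * (y + b * z)) % b = x := by
    rw [Nat.add_mul_mod_self_left, Nat.mod_eq_of_lt hx]
  have hd : (x + b * (y + b * z)) / b = y + b * z := by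
    rw [Nat.add_mul_div_left _ _ (by omega : 0 < b), Nat.div_eq_of_lt hx]; omega
  rw [hm, hd, digits_two_s8 b y z hb hy hz hzb]

lemma ofDigits_one (b x : ℕ) : Nat.ofDigits b [x] = x := by
  simp [Nat.ofDigits]

lemma ofDigits_two (b x y : ℕ) : Nat.ofDigits b [x, y] = x + b * y := by
  simp [Nat.ofDigits]

lemma ofDigits_three (b x y z : ℕ) :
    Nat.ofDigits b [x, y, z] = x + b * (y + b * z) := by
  simp [Nat.ofDigits]

lemma partsum_three (b n m x y z : ℕ) (hd : Nat.digits b n = [x, y, z])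
    (h : PartSum b n m) :
    m = x + b * (y + b * z) ∨ m = x + (y + b * z) ∨
    m = (x + b * y) + z ∨ m = x + y + z := by
  obtain ⟨L, hne, hf, hm⟩ := h
  rw [hd] at hf
  rcases flatten_three L hne x y z hf with h | h | h | h <;> subst h <;>
    simp only [List.map_cons, List.map_nil, List.sum_cons, List.sum_nil,
      ofDigits_one, ofDigits_two, ofDigits_three] at hm <;> omega

lemma partsum_two (b n m x y : ℕ) (hd : Nat.digits b n = [x, y])
    (h : PartSum b n m) :
    m = x + b * y ∨ m = x + y := by
  obtain ⟨L, hne, hf, hm⟩ := h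
  rw [hd] at hf
  rcases flatten_two L hne x y hf with h | h <;> subst h <;>
    simp only [List.map_cons, List.map_nil, List.sum_cons, List.sum_nil,
      ofDigits_one, ofDigits_two] at hm <;> omega

theorem stmt_8 (b : ℕ) (hb : 4 ≤ b) :
    ¬ (3 * b ^ 2 - b - 1 < b ∨
       (∃ m₁, PartSum b (3 * b ^ 2 - b - 1) m₁ ∧ m₁ < b) ∨
       (∃ m₁ m₂, PartSum b (3 * b ^ 2 - b - 1) m₁ ∧ PartSum b m₁ m₂ ∧ m₂ < b)) := by
  have hb1 : 1 < b := by omega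
  have h2 : b ^ 2 = b * b := sq b
  have h3 : b * (b - 2) = b * b - 2 * b := by rw [Nat.mul_sub]; ring_nf
  have h4 : b * (b - 2 + b * 2) = b * (b - 2) + b * (b * 2) := by rw [Nat.mul_add]
  have h5 : b * (b * 2) = 2 * (b * b) := by ring
  have h6 : 4 * b ≤ b * b := Nat.mul_le_mul_right b (by omega)
  have hn : 3 * b ^ 2 - b - 1 = (b - 1) + b * ((b - 2) + b * 2) := by omega
  have hdn : Nat.digits b (3 * b ^ 2 - b - 1) = [b - 1, b - 2, 2] := by
    rw [hn]
    exact digits_three_s8 b (b - 1) (b - 2) 2 hb1 (by omega) (by omega) (by omega) (by omega)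
  have hbm : b * (b - 1) = b * b - b := by rw [Nat.mul_sub]; ring_nf
  -- values of one partition-and-sum step from n
  have step1 : ∀ m, PartSum b (3 * b ^ 2 - b - 1) m →
      m = 3 * b ^ 2 - b - 1 ∨ m = 4 * b - 3 ∨ m = b * b - b + 1 ∨ m = 2 * b - 1 := by
    intro m hm
    rcases partsum_three b _ m (b - 1) (b - 2) 2 hdn hm with h | h | h | h
    · left; omega
    · right; left; omega
    · right; right; left; omega
    · right; right; right; omega
  have hd4 : Nat.digits b (4 * b - 3) = [b - 3, 3] := by
    have he : 4 * b - 3 = (b - 3) + b * 3 := by omega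
    rw [he]; exact digits_two_s8 b (b - 3) 3 hb1 (by omega) (by omega) (by omega)
  have hdq : Nat.digits b (b * b - b + 1) = [1, b - 1] := by
    have he : b * b - b + 1 = 1 + b * (b - 1) := by omega
    rw [he]; exact digits_two_s8 b 1 (b - 1) hb1 (by omega) (by omega) (by omega)
  have hd2 : Nat.digits b (2 * b - 1) = [b - 1, 1] := by
    have he : 2 * b - 1 = (b - 1) + b * 1 := by omega
    rw [he]; exact digits_two_s8 b (b - 1) 1 hb1 (by omega) (by omega) (by omega)
  rintro (h | ⟨m₁, h₁, hm₁⟩ | ⟨m₁, m₂, h₁, h₂, hm₂⟩)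
  · omega
  · rcases step1 m₁ h₁ with h | h | h | h <;> omega
  · rcases step1 m₁ h₁ with h | h | h | h <;> subst h
    · rcases step1 m₂ h₂ with h | h | h | h <;> omega
    · rcases partsum_two b _ m₂ (b - 3) 3 hd4 h₂ with h | h <;> omega
    · rcases partsum_two b _ m₂ 1 (b - 1) hdq h₂ with h | h <;> omega
    · rcases partsum_two b _ m₂ (b - 1) 1 hd2 h₂ with h | h <;> omega
end

section
/- Let b ≥ 4 and k ≥ 0. The number n = 2·b^{k+2} + (b−2)·b + (b−1), i.e., the number with base-b digits 2, 0, ..., 0 (k zeros), b−2, b−1, requires at least three applications of partition and sum in base b to reach a single digit. -/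
open List Nat

theorem Nat.ofDigits_modEq_sum {b : ℕ} (hb : 1 ≤ b) (l : List ℕ) :
    ofDigits b l ≡ l.sum [MOD b - 1] := by
  have hb1 : b ≡ 1 [MOD b - 1] := by
    conv_lhs => rw [← Nat.sub_add_cancel hb]
    exact Nat.add_modEq_left
  simpa [ofDigits_one] using ofDigits_modEq' b 1 (b - 1) hb1 l

theorem Nat.modEq_sub_one_digits_sum {b : ℕ} (hb : 1 ≤ b) (n : ℕ) :
    n ≡ (digits b n).sum [MOD b - 1] := by
  simpa [ofDigits_digits] using ofDigits_modEq_sum hb (digits b n)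

theorem Nat.two_le_digits_sum {b m : ℕ} (hb : 2 ≤ b) (hbm : b ≤ m) (hm : ¬ b ∣ m) :
    2 ≤ (digits b m).sum := by
  have hq : m / b ≠ 0 := (Nat.div_pos hbm (by omega)).ne'
  have hlow : 1 ≤ m % b := Nat.pos_of_ne_zero fun h => hm (Nat.dvd_of_mod_eq_zero h)
  have hhigh : 1 ≤ (digits b (m / b)).sum :=
    (Nat.pos_of_ne_zero (getLast_digit_ne_zero b hq)).trans_le (le_sum_of_mem (getLast_mem _))
  rw [digits_def' (by omega) (by omega), sum_cons]
  omega

theorem List.map_head!_sublist_flatten {α : Type*} [Inhabited α] {L : List (List α)}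
    (hL : ∀ l ∈ L, l ≠ []) : L.map head! <+ L.flatten := by
  induction L with
  | nil => simp
  | cons l L ih =>
    obtain ⟨a, t, rfl⟩ := exists_cons_of_ne_nil (hL l mem_cons_self)
    exact ((ih fun l hl => hL l (mem_cons_of_mem _ hl)).trans
      (sublist_append_right t _)).cons_cons a

namespace PartSum

variable {b n m : ℕ}

theorem digits_sum_le (hb : 1 ≤ b) (h : PartSum b n m) : (digits b n).sum ≤ m := by
  obtain ⟨L, -, hL, rfl⟩ := h
  rw [← hL, sum_flatten]
  exact List.sum_le_sum fun l _ => sum_le_ofDigits l hb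

theorem modEq (hb : 1 ≤ b) (h : PartSum b n m) : m ≡ n [MOD b - 1] := by
  obtain ⟨L, -, hL, rfl⟩ := h
  calc (L.map (ofDigits b)).sum ≡ (L.map List.sum).sum [MOD b - 1] :=
        ModEq.listSum_map fun l _ => ofDigits_modEq_sum hb l
    _ = (digits b n).sum := by rw [← hL, sum_flatten]
    _ ≡ n [MOD b - 1] := (modEq_sub_one_digits_sum hb n).symm

theorem exists_sublist_modEq {d : ℕ} {ds : List ℕ} (h : PartSum b n m)
    (hn : digits b n = d :: ds) : ∃ s, s <+ ds ∧ m ≡ d + s.sum [MOD b] := by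
  obtain ⟨L, hne, hL, rfl⟩ := h
  obtain ⟨l, L', rfl⟩ := exists_cons_of_ne_nil (l := L) (by rintro rfl; simp_all)
  obtain ⟨a, t, rfl⟩ := exists_cons_of_ne_nil (hne _ mem_cons_self)
  simp only [hn, flatten_cons, cons_append, cons.injEq] at hL
  obtain ⟨rfl, rfl⟩ := hL
  refine ⟨L'.map head!, ?_, ?_⟩
  · exact (map_head!_sublist_flatten fun l hl => hne l (mem_cons_of_mem _ hl)).trans
      (sublist_append_right t _)
  · calc (((a :: t) :: L').map (ofDigits b)).sum ≡ (((a :: t) :: L').map head!).sum [MOD b] :=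
          ModEq.listSum_map fun l _ => ofDigits_mod_eq_head! b l
      _ = a + (L'.map head!).sum := by simp

end PartSum

theorem sum_eq_of_sublist_replicate_zero_append {k c : ℕ} {s : List ℕ}
    (h : s <+ replicate k 0 ++ [c]) : s.sum = 0 ∨ s.sum = c := by
  obtain ⟨s₁, s₂, rfl, h₁, h₂⟩ := sublist_append_iff.1 h
  obtain ⟨j, -, rfl⟩ := sublist_replicate_iff.1 h₁
  rcases sublist_singleton.1 h₂ with rfl | rfl <;> simp

theorem sum_eq_of_sublist_cons_replicate_zero_append {a k c : ℕ} {s : List ℕ}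
    (h : s <+ a :: (replicate k 0 ++ [c])) :
    s.sum = 0 ∨ s.sum = c ∨ s.sum = a ∨ s.sum = a + c := by
  rcases sublist_cons_iff.1 h with h | ⟨r, rfl, hr⟩
  · have := sum_eq_of_sublist_replicate_zero_append h
    omega
  · have := sum_eq_of_sublist_replicate_zero_append hr
    simp only [sum_cons]
    omega

theorem digits_witness {b : ℕ} (k : ℕ) (hb : 3 ≤ b) :
    digits b (2 * b ^ (k + 2) + (b - 2) * b + (b - 1)) =
      (b - 1) :: (b - 2) :: (replicate k 0 ++ [2]) := by
  have hval : ofDigits b ((b - 1) :: (b - 2) :: (replicate k 0 ++ [2])) =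
      2 * b ^ (k + 2) + (b - 2) * b + (b - 1) := by
    simp only [ofDigits_cons, ofDigits_append, ofDigits_replicate_zero, ofDigits_nil,
      length_replicate]
    ring
  rw [← hval, digits_ofDigits b (by omega)]
  · intro d hd
    simp only [mem_cons, mem_append, mem_replicate, not_mem_nil, or_false] at hd
    omega
  · simp

theorem PartSum.not_dvd_of_witness {b k m : ℕ} (hb : 4 ≤ b)
    (h : PartSum b (2 * b ^ (k + 2) + (b - 2) * b + (b - 1)) m) : ¬ b ∣ m := by
  obtain ⟨s, hs, hm⟩ := h.exists_sublist_modEq (digits_witness k (by omega))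
  rw [hm.dvd_iff dvd_rfl]
  intro hdvd
  have hb_eq := Nat.eq_of_dvd_of_lt_two_mul (by omega) hdvd
  rcases sum_eq_of_sublist_cons_replicate_zero_append hs with h | h | h | h <;> omega

theorem stmt_9 (b k : ℕ) (hb : 4 ≤ b) :
    ¬ (2 * b ^ (k + 2) + (b - 2) * b + (b - 1) < b ∨
       (∃ m₁, PartSum b (2 * b ^ (k + 2) + (b - 2) * b + (b - 1)) m₁ ∧ m₁ < b) ∨
       (∃ m₁ m₂, PartSum b (2 * b ^ (k + 2) + (b - 2) * b + (b - 1)) m₁ ∧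
         PartSum b m₁ m₂ ∧ m₂ < b)) := by
  set n := 2 * b ^ (k + 2) + (b - 2) * b + (b - 1)
  have hsum : (digits b n).sum = 2 * b - 1 := by
    rw [digits_witness k (by omega)]
    simp only [sum_cons, List.sum_append, sum_replicate, nsmul_zero, sum_nil, add_zero, zero_add]
    omega
  rintro (hlt | ⟨m₁, h₁, hlt⟩ | ⟨m₁, m₂, h₁, h₂, hlt⟩)
  · have := hsum ▸ digit_sum_le b n
    omega
  · have := hsum ▸ h₁.digits_sum_le (by omega)
    omega
  · have hm₁ : 2 * b - 1 ≤ m₁ := hsum ▸ h₁.digits_sum_le (by omega)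
    have hm₂ : 2 ≤ m₂ := (two_le_digits_sum (by omega) (by omega)
      (h₁.not_dvd_of_witness hb)).trans (h₂.digits_sum_le (by omega))
    have hmod : 1 ≡ m₂ [MOD b - 1] :=
      calc 1 ≡ 2 * b - 1 [MOD b - 1] := (modEq_iff_dvd' (by omega)).2 ⟨2, by omega⟩
        _ = (digits b n).sum := hsum.symm
        _ ≡ n [MOD b - 1] := (modEq_sub_one_digits_sum (by omega) n).symm
        _ ≡ m₁ [MOD b - 1] := (h₁.modEq (by omega)).symm
        _ ≡ m₂ [MOD b - 1] := (h₂.modEq (by omega)).symm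
    have := Nat.le_of_dvd (by omega) ((modEq_iff_dvd' (by omega)).1 hmod)
    omega
end

section
/- Let b ≥ 4 and let n be a natural number whose base-b digit sum m satisfies m ≥ b². Then some single partition-and-sum step takes n to a number of the form c·b^t + d·b + e with c ∈ {1,2}, digits d, e < b, and d·b + e ≤ b² − 2b (in particular, the base-b representation of the result is c followed by zeros followed by the two digits d, e). -/
/-!
Only blocks of length one or two are needed. Let `D` be the digits of `n`, least significant
first, and `pairSum b D` the value of the split into pairs starting from the first digit.
Turning the singletons `x, y` into the pair `[x, y]`, one position at a time from the start,
walks from `D.sum` up to `pairSum b D`, each switch raising the value by `(b - 1) y ≤ (b - 1)^2`;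
so every `K` in between has a reachable value in `[K, K + b^2 - 2b]`. Pairing from the first or
from the second digit gives two values with sum at least `2x + (b + 1) (D.sum - x)`, `x < b` the
first digit, which is at least `b D.sum` as `D.sum ≥ b^2`. So one of them reaches
`b D.sum / 2`, and between `D.sum` and `b D.sum / 2` lies a number `c b^t` with `c ∈ {1, 2}`,
`t ≥ 2`, since `b ≥ 4`. The reachable value just above `c b^t` has the claimed form.
-/

/-- Sums obtained from a little-endian digit list by splitting it into blocks of length one or
two; the block `[x, y]` has value `x + b * y`. -/
inductive ShortBlockSum (b : ℕ) : List ℕ → ℕ → Prop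
  | nil : ShortBlockSum b [] 0
  | single {D : List ℕ} {m : ℕ} (x : ℕ) : ShortBlockSum b D m → ShortBlockSum b (x :: D) (x + m)
  | pair {D : List ℕ} {m : ℕ} (x y : ℕ) :
      ShortBlockSum b D m → ShortBlockSum b (x :: y :: D) (x + b * y + m)

namespace ShortBlockSum

variable {b : ℕ}

theorem exists_blocks {D : List ℕ} {m : ℕ} (h : ShortBlockSum b D m) :
    ∃ L : List (List ℕ), (∀ l ∈ L, l ≠ []) ∧ L.flatten = D ∧
      m = (L.map (fun l => Nat.ofDigits b l)).sum := by
  induction h with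
  | nil => exact ⟨[], by simp, rfl, rfl⟩
  | single x _ ih =>
    obtain ⟨L, hne, rfl, rfl⟩ := ih
    exact ⟨[x] :: L, by simpa using hne, rfl, by simp [Nat.ofDigits]⟩
  | pair x y _ ih =>
    obtain ⟨L, hne, rfl, rfl⟩ := ih
    exact ⟨[x, y] :: L, by simpa using hne, rfl, by simp [Nat.ofDigits]⟩

theorem partSum {n m : ℕ} (h : ShortBlockSum b (Nat.digits b n) m) : PartSum b n m :=
  h.exists_blocks

end ShortBlockSum

theorem shortBlockSum_sum (b : ℕ) : ∀ D : List ℕ, ShortBlockSum b D D.sum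
  | [] => .nil
  | x :: D => by simpa using (shortBlockSum_sum b D).single x

def pairSum (b : ℕ) : List ℕ → ℕ
  | [] => 0
  | [x] => x
  | x :: y :: D => x + b * y + pairSum b D

section pairSum

variable {b : ℕ}

theorem sum_le_pairSum (hb : 1 ≤ b) : ∀ D : List ℕ, D.sum ≤ pairSum b D
  | [] => le_rfl
  | [x] => by simp [pairSum]
  | x :: y :: D => by
    have := sum_le_pairSum hb D
    simp only [pairSum, List.sum_cons]
    nlinarith

theorem add_mul_sum_le_pairSum_add (b : ℕ) : ∀ (x : ℕ) (T : List ℕ),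
    x + (b + 1) * T.sum ≤ pairSum b (x :: T) + pairSum b T
  | x, [] => by simp [pairSum]
  | x, y :: T => by
    have := add_mul_sum_le_pairSum_add b y T
    simp only [pairSum, List.sum_cons]
    nlinarith

end pairSum

open ShortBlockSum in
theorem exists_shortBlockSum_of_sum_le_of_le_pairSum {b : ℕ} (hb : 2 ≤ b) :
    ∀ D : List ℕ, (∀ z ∈ D, z < b) → ∀ K, D.sum ≤ K → K ≤ pairSum b D →
      ∃ m, ShortBlockSum b D m ∧ K ≤ m ∧ m ≤ K + (b ^ 2 - 2 * b)
  | [], _, K, _, hK => ⟨0, nil, hK, by omega⟩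
  | [x], _, K, hsum, hK => by
    simp only [pairSum, List.sum_cons, List.sum_nil, add_zero] at hsum hK
    exact ⟨x + 0, single x nil, by omega, by omega⟩
  | x :: y :: D, hdig, K, hsum, hK => by
    have hD : ∀ z ∈ D, z < b := fun z hz => hdig z (by simp [hz])
    have hy : y < b := hdig y (by simp)
    have hsD : D.sum ≤ pairSum b D := sum_le_pairSum (by omega) D
    simp only [List.sum_cons, pairSum] at hsum hK
    by_cases hsingles : K ≤ x + y + pairSum b D
    · obtain ⟨m, hm, hKm, hmK⟩ :=
        exists_shortBlockSum_of_sum_le_of_le_pairSum hb D hD (K - (x + y)) (by omega) (by omega)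
      exact ⟨x + (y + m), single x (single y hm), by omega, by omega⟩
    by_cases hpair : K ≤ x + b * y + D.sum
    · refine ⟨_, pair x y (shortBlockSum_sum b D), hpair, ?_⟩
      -- the jump from `x + y + D.sum < K` is `(b - 1) y ≤ (b - 1)^2`
      have : b * y + 2 * b ≤ y + b ^ 2 + 1 := by nlinarith
      omega
    · obtain ⟨m, hm, hKm, hmK⟩ := exists_shortBlockSum_of_sum_le_of_le_pairSum hb D hD
        (K - (x + b * y)) (by omega) (by omega)
      exact ⟨x + b * y + m, pair x y hm, by omega, by omega⟩

theorem exists_shortBlockSum_of_two_mul_le {b L : ℕ} {D : List ℕ} (hb : 2 ≤ b)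
    (hdig : ∀ z ∈ D, z < b) (hbD : b ^ 2 ≤ D.sum) (hDL : D.sum ≤ L) (hLD : 2 * L ≤ b * D.sum) :
    ∃ m, ShortBlockSum b D m ∧ L ≤ m ∧ m ≤ L + (b ^ 2 - 2 * b) := by
  obtain _ | ⟨x, T⟩ := D
  · exact absurd hbD (by simp only [List.sum_nil, not_le]; positivity)
  have hx : x < b := hdig x (by simp)
  have hT : ∀ z ∈ T, z < b := fun z hz => hdig z (by simp [hz])
  have hsT : T.sum ≤ pairSum b T := sum_le_pairSum (by omega) T
  have hpairs := add_mul_sum_le_pairSum_add b x T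
  simp only [List.sum_cons] at hbD hDL hLD
  have hxT : b * x ≤ 2 * x + T.sum := by
    have := Nat.mul_le_mul_left b (Nat.succ_le_of_lt hx)
    nlinarith
  have hbig : L ≤ pairSum b (x :: T) ∨ L ≤ x + pairSum b T := by
    by_contra! hsmall
    have : b * (x + T.sum) ≤ 2 * x + (b + 1) * T.sum := by nlinarith
    omega
  rcases hbig with hL | hL
  · exact exists_shortBlockSum_of_sum_le_of_le_pairSum hb (x :: T) hdig L (by simpa using hDL) hL
  · obtain ⟨m, hm, hLm, hmL⟩ :=
      exists_shortBlockSum_of_sum_le_of_le_pairSum hb T hT (L - x) (by omega) (by omega)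
    exact ⟨x + m, hm.single x, by omega, by omega⟩

theorem exists_one_or_two_mul_pow_between {b S : ℕ} (hb : 4 ≤ b) (hS : b ^ 2 ≤ S) :
    ∃ c t, (c = 1 ∨ c = 2) ∧ 2 ≤ t ∧ S ≤ c * b ^ t ∧ 2 * (c * b ^ t) ≤ b * S := by
  have hb1 : 1 < b := by omega
  have hS0 : S ≠ 0 := (pow_pos (by omega) 2 |>.trans_le hS).ne'
  set t := Nat.log b S
  have hlow : b ^ t ≤ S := Nat.pow_log_le_self b hS0
  have hhigh : S < b * b ^ t := by rw [← pow_succ']; exact Nat.lt_pow_succ_log_self hb1 S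
  have ht : 2 ≤ t := (Nat.le_log_iff_pow_le hb1 hS0).mpr hS
  by_cases hS2 : S ≤ 2 * b ^ t
  · refine ⟨2, t, Or.inr rfl, ht, hS2, ?_⟩
    calc 2 * (2 * b ^ t) = 4 * b ^ t := by ring
      _ ≤ b * S := Nat.mul_le_mul hb hlow
  · refine ⟨1, t + 1, Or.inl rfl, by omega, by rw [pow_succ']; omega, ?_⟩
    calc 2 * (1 * b ^ (t + 1)) = b * (2 * b ^ t) := by ring
      _ ≤ b * S := Nat.mul_le_mul_left _ (by omega)

theorem stmt_10 (b n : ℕ) (hb : 4 ≤ b) (hm : b ^ 2 ≤ (Nat.digits b n).sum) :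
    ∃ m c t d e : ℕ, PartSum b n m ∧ m = c * b ^ t + d * b + e ∧
      (c = 1 ∨ c = 2) ∧ 2 ≤ t ∧ d < b ∧ e < b ∧ d * b + e ≤ b ^ 2 - 2 * b := by
  have hdig : ∀ z ∈ Nat.digits b n, z < b := fun z hz => Nat.digits_lt_base (by omega) hz
  obtain ⟨c, t, hc, ht, hSL, hLS⟩ := exists_one_or_two_mul_pow_between hb hm
  obtain ⟨m, hsplit, hLm, hmL⟩ := exists_shortBlockSum_of_two_mul_le (by omega) hdig hm hSL hLS
  have hdivmod := Nat.div_add_mod' (m - c * b ^ t) b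
  have hgap : m - c * b ^ t < b * b := by
    have : 2 * b ≤ b ^ 2 := by nlinarith
    rw [← sq]; omega
  refine ⟨m, c, t, (m - c * b ^ t) / b, (m - c * b ^ t) % b, hsplit.partSum, by omega, hc, ht,
    Nat.div_lt_of_lt_mul hgap, Nat.mod_lt _ (by omega), by omega⟩
end

section
/- In base 3, no partition-and-sum of the number 1781 = 2102222₃ equals a power of 3; consequently, since 1781 is odd (≡ 1 mod 2), it cannot reach a single digit in two steps. -/
/-- All partitions of a list into consecutive nonempty blocks. -/
def parts : List ℕ → List (List (List ℕ))
  | [] => [[]]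
  | x :: xs => (parts xs).flatMap fun P =>
      match P with
      | [] => [[[x]]]
      | l :: rest => [[x] :: l :: rest, (x :: l) :: rest]

lemma mem_parts : ∀ (d : List ℕ) (L : List (List ℕ)), (∀ l ∈ L, l ≠ []) →
    L.flatten = d → L ∈ parts d := by
  intro d
  induction d with
  | nil =>
    rintro (_ | ⟨l, L'⟩) h hf
    · simp [parts]
    · have : l = [] := by
        cases l with
        | nil => rfl
        | cons a t => simp at hf
      exact absurd this (h l (by simp))
  | cons x xs ih =>
    rintro (_ | ⟨(_ | ⟨y, t⟩), L'⟩) h hf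
    · simp at hf
    · exact absurd rfl (h _ (by simp))
    · simp only [List.flatten_cons, List.cons_append, List.cons.injEq] at hf
      obtain ⟨rfl, hf⟩ := hf
      cases t with
      | nil =>
        have hL' : L' ∈ parts xs := ih L' (fun l hl => h l (by simp [hl])) (by simpa using hf)
        simp only [parts, List.mem_flatMap]
        refine ⟨L', hL', ?_⟩
        cases L' <;> simp
      | cons z t' =>
        have hmem : (z :: t') :: L' ∈ parts xs := by
          refine ih _ ?_ (by simpa using hf)
          intro l hl
          rcases List.mem_cons.mp hl with rfl | hl
          · simp
          · exact h l (by simp [hl])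
        simp only [parts, List.mem_flatMap]
        exact ⟨(z :: t') :: L', hmem, by simp⟩

lemma partSum_mem {n m : ℕ} (h : PartSum 3 n m) :
    m ∈ (parts (Nat.digits 3 n)).map (fun P => (P.map (fun l => Nat.ofDigits 3 l)).sum) := by
  obtain ⟨L, hne, hf, rfl⟩ := h
  exact List.mem_map.mpr ⟨L, mem_parts _ L hne hf, rfl⟩

lemma ofDigits_mod_two (l : List ℕ) : Nat.ofDigits 3 l % 2 = l.sum % 2 := by
  have := Nat.ofDigits_modEq 3 2 l
  simpa [Nat.ModEq, Nat.ofDigits_one] using this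

lemma sums_mod_two (L : List (List ℕ)) :
    (L.map (fun l => Nat.ofDigits 3 l)).sum % 2 = (L.map (fun l => l.sum)).sum % 2 := by
  induction L with
  | nil => rfl
  | cons l L ih =>
    simp only [List.map_cons, List.sum_cons]
    have h1 := ofDigits_mod_two l
    omega

lemma partSum_mod_two {n m : ℕ} (h : PartSum 3 n m) : m % 2 = n % 2 := by
  obtain ⟨L, hne, hf, rfl⟩ := h
  have h1 := sums_mod_two L
  have h2 : (L.map (fun l => l.sum)).sum = (Nat.digits 3 n).sum := by
    rw [← hf, ← List.sum_flatten]
  have h3 : n % 2 = (Nat.digits 3 n).sum % 2 := Nat.modEq_digits_sum 2 3 (by norm_num) n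
  omega

lemma sum_le_ofDigits (l : List ℕ) : l.sum ≤ Nat.ofDigits 3 l := by
  induction l with
  | nil => simp
  | cons d l ih =>
    simp only [List.sum_cons, Nat.ofDigits_cons]
    omega

lemma partSum_digitsum_le {n m : ℕ} (h : PartSum 3 n m) : (Nat.digits 3 n).sum ≤ m := by
  obtain ⟨L, hne, hf, rfl⟩ := h
  rw [← hf]
  clear hne hf
  induction L with
  | nil => simp
  | cons l L ih =>
    simp only [List.flatten_cons, List.sum_append, List.map_cons, List.sum_cons]
    exact Nat.add_le_add (sum_le_ofDigits l) ih

lemma ofDigits_eq_zero : ∀ l : List ℕ, (∀ x ∈ l, x = 0) → Nat.ofDigits 3 l = 0 := by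
  intro l
  induction l with
  | nil => simp
  | cons d l ih =>
    intro h
    rw [Nat.ofDigits_cons, h d (by simp), ih (fun x hx => h x (by simp [hx]))]

lemma digits_sum_pos {m : ℕ} (hm : 0 < m) : 0 < (Nat.digits 3 m).sum := by
  by_contra h
  push_neg at h
  have hz : ∀ x ∈ Nat.digits 3 m, x = 0 := by
    intro x hx
    have := List.single_le_sum (fun y _ => Nat.zero_le y) x hx
    omega
  have h0 : Nat.ofDigits 3 (Nat.digits 3 m) = 0 := ofDigits_eq_zero _ hz
  rw [Nat.ofDigits_digits] at h0
  omega

lemma eq_pow_of_digitsum_le_one : ∀ m : ℕ, 0 < m → (Nat.digits 3 m).sum ≤ 1 → ∃ k, m = 3 ^ k := by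
  intro m
  induction m using Nat.strong_induction_on with
  | _ m ih =>
    intro hm hsum
    rw [Nat.digits_def' (by norm_num : (1:ℕ) < 3) hm] at hsum
    simp only [List.sum_cons] at hsum
    have hcases : m % 3 = 0 ∨ m % 3 = 1 ∨ m % 3 = 2 := by omega
    rcases hcases with h0 | h1 | h2
    · have hdvd : 3 ∣ m := Nat.dvd_of_mod_eq_zero h0
      have hpos : 0 < m / 3 := Nat.div_pos (Nat.le_of_dvd hm hdvd) (by norm_num)
      obtain ⟨k, hk⟩ := ih (m / 3) (Nat.div_lt_self hm (by norm_num)) hpos (by omega)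
      exact ⟨k + 1, by rw [pow_succ, ← hk]; omega⟩
    · have : (Nat.digits 3 (m / 3)).sum = 0 := by omega
      have hz : m / 3 = 0 := by
        by_contra hne
        have := digits_sum_pos (Nat.pos_of_ne_zero hne)
        omega
      exact ⟨0, by omega⟩
    · omega

theorem stmt_15 :
    (∀ m : ℕ, PartSum 3 1781 m → ¬ ∃ k : ℕ, m = 3 ^ k) ∧
    ¬ (∃ m₁ m₂, PartSum 3 1781 m₁ ∧ PartSum 3 m₁ m₂ ∧ m₂ < 3) := by
  have hdig : Nat.digits 3 1781 = [2,2,2,2,0,1,2] := by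
    simp [Nat.digits_def' (by norm_num : (1:ℕ) < 3)]
  have key : ∀ m : ℕ, PartSum 3 1781 m → ¬ ∃ k : ℕ, m = 3 ^ k := by
    intro m hps ⟨k, hk⟩
    have hmem := partSum_mem hps
    rw [hdig] at hmem
    have hprop : ∀ x ∈ (parts [2,2,2,2,0,1,2]).map
        (fun P => (P.map (fun l => Nat.ofDigits 3 l)).sum),
        x ≤ 1781 ∧ x ∉ ([1,3,9,27,81,243,729] : List ℕ) := by decide
    obtain ⟨hle, hnot⟩ := hprop m hmem
    have hk7 : k < 7 := by
      by_contra hge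
      push_neg at hge
      have : 3 ^ 7 ≤ 3 ^ k := Nat.pow_le_pow_right (by norm_num) hge
      omega
    interval_cases k <;> simp_all
  refine ⟨key, ?_⟩
  rintro ⟨m₁, m₂, h1, h2, h3⟩
  have p1 : m₁ % 2 = 1 := by rw [partSum_mod_two h1]
  have p2 : m₂ % 2 = 1 := by rw [partSum_mod_two h2]; exact p1
  have hm2 : m₂ = 1 := by omega
  have hds : (Nat.digits 3 m₁).sum ≤ 1 := by
    have := partSum_digitsum_le h2
    omega
  obtain ⟨k, hk⟩ := eq_pow_of_digitsum_le_one m₁ (by omega) hds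
  exact key m₁ h1 ⟨k, hk⟩
end
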